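/- arXiv:0803.0864 — 3 statements merged into one kernel-verified Lean document; each statement's English description precedes it below -/
import Mathlib

section
/- For every integer r ≥ 3, r^{(r-1)(r-2)} · ((r-2)!)^2 < (r-1)^{(r+1)(r-2)}. -/
/-!
With `n = r - 2` the claim reads `(n+2)^((n+1)n) (n!)² < (n+1)^((n+3)n)`.
Bernoulli's inequality gives `(n+2)^(n+1) ≥ 2 (n+1)^(n+1)`, hence `2ⁿ n! ≤ (n+1)ⁿ` by induction;
and `(1 + 1/m)^m ≤ e < 3` gives `(n+2)^(n+1) < 3 (n+1)^(n+1)`. Squaring the first bound and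
raising the second to the `n`-th power,
`4ⁿ (n+2)^((n+1)n) (n!)² < 3ⁿ (n+1)^((n+1)n) (n+1)^(2n) ≤ 4ⁿ (n+1)^((n+3)n)`.
-/

open Nat

theorem two_mul_succ_pow_le (n : ℕ) : 2 * (n + 1) ^ (n + 1) ≤ (n + 2) ^ (n + 1) := by
  have h := pow_add_mul_le_add_pow (a := n + 1) (b := 1) (Nat.zero_le _) (by positivity) (n + 1)
  rw [Nat.add_sub_cancel, mul_one, Nat.cast_id, ← pow_succ'] at h
  exact (two_mul _).trans_le h

theorem two_pow_mul_factorial_le (n : ℕ) : 2 ^ n * n ! ≤ (n + 1) ^ n := by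
  induction n with
  | zero => simp
  | succ n ih =>
    calc 2 ^ (n + 1) * (n + 1)! = 2 * (n + 1) * (2 ^ n * n !) := by
          rw [factorial_succ]; ring
      _ ≤ 2 * (n + 1) * (n + 1) ^ n := by gcongr
      _ = 2 * (n + 1) ^ (n + 1) := by ring
      _ ≤ (n + 2) ^ (n + 1) := two_mul_succ_pow_le n

theorem succ_pow_lt_three_mul_pow (n : ℕ) : (n + 1) ^ n < 3 * n ^ n := by
  rcases eq_or_ne n 0 with rfl | hn
  · norm_num
  have hexp : (1 + (n : ℝ)⁻¹) ^ n < 3 :=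
    Real.one_add_inv_pow_le_exp.trans_lt (Real.exp_one_lt_d9.trans (by norm_num))
  have : ((n : ℝ) + 1) ^ n < 3 * (n : ℝ) ^ n :=
    calc ((n : ℝ) + 1) ^ n = (1 + (n : ℝ)⁻¹) ^ n * (n : ℝ) ^ n := by
          rw [← mul_pow]; field_simp
      _ < 3 * (n : ℝ) ^ n := by gcongr
  exact_mod_cast this

theorem add_two_pow_mul_factorial_sq_lt {n : ℕ} (hn : n ≠ 0) :
    (n + 2) ^ ((n + 1) * n) * n ! ^ 2 < (n + 1) ^ ((n + 3) * n) := by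
  have hpow : ((n + 2) ^ (n + 1)) ^ n < (3 * (n + 1) ^ (n + 1)) ^ n :=
    Nat.pow_lt_pow_left (succ_pow_lt_three_mul_pow (n + 1)) hn
  have hfour : (4 : ℕ) ^ n = (2 ^ n) ^ 2 := by rw [pow_right_comm]; norm_num
  have hsplit : (n + 1) ^ ((n + 3) * n) = ((n + 1) ^ (n + 1)) ^ n * ((n + 1) ^ n) ^ 2 := by
    rw [← pow_mul, ← pow_mul, ← pow_add]; ring_nf
  rw [pow_mul, hsplit]
  refine Nat.lt_of_mul_lt_mul_left (a := 4 ^ n) ?_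
  calc 4 ^ n * (((n + 2) ^ (n + 1)) ^ n * n ! ^ 2)
        = ((n + 2) ^ (n + 1)) ^ n * (2 ^ n * n !) ^ 2 := by
          rw [mul_left_comm, hfour, ← mul_pow]
    _ < (3 * (n + 1) ^ (n + 1)) ^ n * ((n + 1) ^ n) ^ 2 :=
        Nat.mul_lt_mul_of_lt_of_le hpow (by gcongr; exact two_pow_mul_factorial_le n)
          (by positivity)
    _ ≤ (4 * (n + 1) ^ (n + 1)) ^ n * ((n + 1) ^ n) ^ 2 := by gcongr; norm_num
    _ = 4 ^ n * (((n + 1) ^ (n + 1)) ^ n * ((n + 1) ^ n) ^ 2) := by rw [mul_pow, mul_assoc]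

theorem pow_factorial_ineq (r : ℕ) (hr : 3 ≤ r) :
    r ^ ((r - 1) * (r - 2)) * (r - 2).factorial ^ 2 < (r - 1) ^ ((r + 1) * (r - 2)) := by
  obtain ⟨n, rfl⟩ : ∃ n, r = n + 2 := ⟨r - 2, by omega⟩
  simpa using add_two_pow_mul_factorial_sq_lt (n := n) (by omega)
end

section
/- For every integer r ≥ 3, (r-1)·log(r/(r-1)) + 2·((1/(r-2))·log((r-2)!) − log(r-1)) < 0. -/
/-!
The first summand is below `1`, since `log x < x - 1`. For the second, AM-GM on the factors
of `n!` gives `n! ≤ ((n + 1) / 2) ^ n` (by induction, the step being Bernoulli's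
`(1 + 1/n) ^ n ≥ 2`), so the geometric mean of `1, …, r - 2` is at most `(r - 1) / 2` and the
second summand is at most `-2 log 2`. The sum is then below `1 - 2 log 2 < 0`.
-/

open Real
open scoped Nat

lemma two_le_one_add_inv_pow {n : ℕ} (hn : n ≠ 0) : (2 : ℝ) ≤ (1 + (n : ℝ)⁻¹) ^ n := by
  have hBernoulli := one_add_mul_le_pow (a := (n : ℝ)⁻¹)
    (by linarith [inv_nonneg.2 (Nat.cast_nonneg (α := ℝ) n)]) n
  rwa [mul_inv_cancel₀ (by exact_mod_cast hn), one_add_one_eq_two] at hBernoulli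

lemma factorial_le_half_succ_pow (n : ℕ) : (n ! : ℝ) ≤ ((n + 1) / 2) ^ n := by
  induction n with
  | zero => simp
  | succ n ih =>
    have hn : (0 : ℝ) < n + 1 := by positivity
    have hstep : (n + 1 + 1 : ℝ) / 2 = (n + 1) / 2 * (1 + (n + 1 : ℝ)⁻¹) := by
      field_simp
    calc ((n + 1) ! : ℝ) = (n + 1) * n ! := by push_cast [Nat.factorial_succ]; ring
      _ ≤ (n + 1) * ((n + 1) / 2) ^ n := by gcongr
      _ = ((n + 1) / 2) ^ (n + 1) * 2 := by ring
      _ ≤ ((n + 1) / 2) ^ (n + 1) * (1 + (n + 1 : ℝ)⁻¹) ^ (n + 1) := by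
        gcongr
        exact_mod_cast two_le_one_add_inv_pow n.succ_ne_zero
      _ = ((↑(n + 1) + 1) / 2) ^ (n + 1) := by rw [← mul_pow, ← hstep]; push_cast; ring

lemma log_factorial_le (n : ℕ) : log (n ! : ℝ) ≤ n * log ((n + 1) / 2) := by
  rw [← log_pow]
  exact log_le_log (by positivity) (factorial_le_half_succ_pow n)

lemma sub_one_mul_log_div_sub_one_lt_one {x : ℝ} (hx : 1 < x) :
    (x - 1) * log (x / (x - 1)) < 1 := by
  have hpos : 0 < x - 1 := by linarith
  have hlog : log (x / (x - 1)) < x / (x - 1) - 1 :=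
    log_lt_sub_one_of_pos (by positivity) (by rw [Ne, div_eq_one_iff_eq hpos.ne']; linarith)
  calc (x - 1) * log (x / (x - 1)) < (x - 1) * (x / (x - 1) - 1) := by gcongr
    _ = 1 := by field_simp; ring

theorem s_r_neg (r : ℕ) (hr : 3 ≤ r) :
    ((r : ℝ) - 1) * Real.log ((r : ℝ) / ((r : ℝ) - 1)) +
      2 * ((1 / ((r : ℝ) - 2)) * Real.log ((r - 2).factorial) - Real.log ((r : ℝ) - 1)) < 0 := by
  have hr' : (3 : ℝ) ≤ r := by exact_mod_cast hr
  have hcast : ((r - 2 : ℕ) : ℝ) = r - 2 := by push_cast [show 2 ≤ r by omega]; ring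
  have hfirst := sub_one_mul_log_div_sub_one_lt_one (x := r) (by linarith)
  have hsecond : 1 / ((r : ℝ) - 2) * log ((r - 2)! : ℝ) ≤ log ((r : ℝ) - 1) - log 2 := by
    have h := log_factorial_le (r - 2)
    rw [hcast, show (r : ℝ) - 2 + 1 = r - 1 by ring, log_div (by linarith) two_ne_zero] at h
    rw [one_div_mul_eq_div, div_le_iff₀ (by linarith), mul_comm]
    exact h
  linarith [log_two_gt_d9]
end

section
/- Let G be a finite simple undirected graph on an even number of vertices. Then the number of perfect matchings of G is at most Π_{v ∈ V(G)} (deg(v)!)^{1/(2 deg(v))}, where if some vertex has degree 0 the number of perfect matchings is 0 (convention 0^{1/0} = 0). -/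
/-!
Write `a d = log (d!) / d`, so that the bound reads `2 log #PM(G) ≤ ∑ᵥ a (deg v)`; we prove it for
every induced subgraph `G[s]` by strong induction on `s`. Fix a vertex `v` and count the
matchings by the partner of `v`: the partner takes at most `deg v` values, so by Jensen's
inequality for `x log x` we get `m log m ≤ m log (deg v) + ∑_M log c(v, M v)`, where
`c(v, u)` counts the matchings containing `vu`; these inject into the perfect matchings of
`G[s \ {v, u}]`, to which the induction hypothesis applies. In `G[s \ {v, u}]` every degree
drops by `δ ≤ 2`, and since `a` is concave on `d ≥ 1` we may linearize `a (d - δ)` at `d`.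
Summed over `v` and over the matchings, each vertex `w` loses `2 (deg w - 1)` neighbours in
total, and the identity `log d = a d + (d - 1) (a d - a (d - 1))` collapses the sum to
`n m log m ≤ n m / 2 ∑ a (deg w)`.
-/

open Finset Real SimpleGraph

open scoped Nat

noncomputable def logFactorialRoot (d : ℕ) : ℝ := log d ! / d

lemma logFactorialRoot_nonneg (d : ℕ) : 0 ≤ logFactorialRoot d :=
  div_nonneg (log_nonneg (Nat.one_le_cast.mpr d.factorial_pos)) d.cast_nonneg

lemma mul_logFactorialRoot {d : ℕ} (hd : d ≠ 0) : d * logFactorialRoot d = log d ! := by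
  rw [logFactorialRoot, mul_div_cancel₀ _ (Nat.cast_ne_zero.mpr hd)]

lemma log_factorial_succ (n : ℕ) : log (n + 1)! = log (n + 1 : ℝ) + log n ! := by
  rw [Nat.factorial_succ, Nat.cast_mul, log_mul (by positivity) (by positivity), Nat.cast_succ]

lemma log_eq_logFactorialRoot_add (d : ℕ) :
    log d = logFactorialRoot d + (d - 1) * (logFactorialRoot d - logFactorialRoot (d - 1)) := by
  rcases d with _ | k
  · simp [logFactorialRoot]
  have hk := mul_logFactorialRoot k.succ_ne_zero
  have hk' : k * logFactorialRoot k = log k ! := by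
    rcases k.eq_zero_or_pos with rfl | hpos
    · simp
    · exact mul_logFactorialRoot hpos.ne'
  rw [log_factorial_succ] at hk
  simp only [Nat.add_sub_cancel, Nat.cast_succ] at hk ⊢
  linear_combination -hk + hk'

lemma two_mul_log_factorial_le {m : ℕ} (hm : 1 ≤ m) :
    2 * log m ! ≤ 2 * m * log m - (m - 1) := by
  induction m, hm using Nat.le_induction with
  | base => simp
  | succ k hk ih =>
    have hk' : (1 : ℝ) ≤ k := by exact_mod_cast hk
    have hlog : 1 / 2 ≤ k * (log (k + 1) - log k) := by
      have := one_sub_inv_le_log_of_pos (x := (k + 1) / k) (by positivity)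
      rw [log_div (by positivity) (by positivity), inv_div] at this
      calc (1 : ℝ) / 2 ≤ k * (1 - k / (k + 1)) := by
            field_simp
            linarith
        _ ≤ _ := by gcongr
    rw [log_factorial_succ]
    push_cast
    linarith

lemma logFactorialRoot_add_two_add_le {m : ℕ} (hm : 1 ≤ m) :
    logFactorialRoot (m + 2) + logFactorialRoot m ≤ 2 * logFactorialRoot (m + 1) := by
  have hA := mul_logFactorialRoot (d := m + 2) (by omega)
  have hB := mul_logFactorialRoot (d := m) (by omega)
  have hC := mul_logFactorialRoot (d := m + 1) (by omega)
  have hL := two_mul_log_factorial_le (m := m + 1) (by omega)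
  rw [log_factorial_succ (m + 1)] at hA
  push_cast at hA hB hC hL
  rw [show (m : ℝ) + 1 + 1 = m + 2 by ring] at hA
  have hlog : (m + 1 : ℝ) * (log (m + 2) - log (m + 1)) ≤ 1 := by
    have := log_le_sub_one_of_pos (x := (m + 2 : ℝ) / (m + 1)) (by positivity)
    rw [log_div (by positivity) (by positivity)] at this
    calc _ ≤ (m + 1 : ℝ) * ((m + 2) / (m + 1) - 1) := by gcongr
      _ = 1 := by field_simp; ring
  have hcleared : m * (m + 1) * (m + 2) * (logFactorialRoot (m + 2) + logFactorialRoot m -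
      2 * logFactorialRoot (m + 1)) = 2 * log (m + 1)! + (m : ℝ) * (m + 1) * log (m + 2) -
        (m + 1) * (m + 2) * log (m + 1) := by
    linear_combination (m * (m + 1) : ℝ) * hA + ((m + 1) * (m + 2) : ℝ) * hB -
      (2 * m * (m + 2) : ℝ) * hC - ((m + 1) * (m + 2) : ℝ) * log_factorial_succ m
  have hpos : (0 : ℝ) < m * (m + 1) * (m + 2) := by positivity
  nlinarith [mul_le_mul_of_nonneg_left hlog (by positivity : (0 : ℝ) ≤ m)]

lemma exp_logFactorialRoot_div_two (d : ℕ) :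
    exp (logFactorialRoot d / 2) = (d ! : ℝ) ^ ((1 : ℝ) / (2 * d)) := by
  rw [rpow_def_of_pos (by positivity), logFactorialRoot]
  ring_nf

lemma logFactorialRoot_sub_le {d δ : ℕ} (hδ : δ ≤ 2) (hd : δ < d) :
    logFactorialRoot (d - δ) ≤
      logFactorialRoot d - δ * (logFactorialRoot d - logFactorialRoot (d - 1)) := by
  interval_cases δ
  · simp
  · simp
  · obtain ⟨m, rfl⟩ : ∃ m, d = m + 2 := ⟨d - 2, by omega⟩
    have := logFactorialRoot_add_two_add_le (m := m) (by omega)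
    simp only [Nat.add_sub_cancel, show m + 2 - 1 = m + 1 by omega, Nat.cast_ofNat]
    linarith

lemma sum_mul_log_sum_le {ι : Type*} (t : Finset ι) (c : ι → ℝ) (hc : ∀ i ∈ t, 0 ≤ c i) :
    (∑ i ∈ t, c i) * log (∑ i ∈ t, c i) ≤
      (∑ i ∈ t, c i) * log #t + ∑ i ∈ t, c i * log (c i) := by
  by_cases hT : ∑ i ∈ t, c i = 0
  · have hzero := (sum_eq_zero_iff_of_nonneg hc).mp hT
    rw [hT, sum_eq_zero fun i hi => by rw [hzero i hi, zero_mul]]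
    simp
  have hr : (0 : ℝ) < #t := by
    exact_mod_cast card_pos.mpr (nonempty_of_sum_ne_zero hT)
  have hJ := convexOn_mul_log.map_sum_le (t := t) (w := fun _ => (#t : ℝ)⁻¹) (p := c)
    (fun _ _ => by positivity) (by simp [hr.ne']) hc
  simp only [smul_eq_mul, ← mul_sum] at hJ
  rw [log_mul (inv_ne_zero hr.ne') hT, log_inv] at hJ
  have := mul_le_mul_of_nonneg_left hJ hr.le
  field_simp at this
  linarith

lemma card_mul_log_card_le_of_mapsTo {α β : Type*} [DecidableEq β] {s : Finset α}
    {t : Finset β} {g : α → β} (hg : ∀ a ∈ s, g a ∈ t) :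
    (#s : ℝ) * log #s ≤ #s * log #t + ∑ a ∈ s, log #{b ∈ s | g b = g a} := by
  have hfib : ∑ a ∈ s, log (#{b ∈ s | g b = g a} : ℝ) =
      ∑ u ∈ t, (#{b ∈ s | g b = u} : ℝ) * log #{b ∈ s | g b = u} := by
    rw [← sum_fiberwise_of_maps_to hg]
    refine sum_congr rfl fun u _ => ?_
    rw [sum_congr rfl fun a ha => by rw [(mem_filter.mp ha).2], sum_const, nsmul_eq_mul]
  have hcard : (#s : ℝ) = ∑ u ∈ t, (#{b ∈ s | g b = u} : ℝ) := by
    exact_mod_cast card_eq_sum_card_fiberwise hg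
  rw [hfib, hcard]
  exact sum_mul_log_sum_le t _ fun _ _ => Nat.cast_nonneg _

lemma sum_sum_sdiff_pair_comm {α M : Type*} [DecidableEq α] [AddCommMonoid M] {f : α → α}
    (hf : Function.Involutive f) (s : Finset α) (F : α → α → M) :
    ∑ v ∈ s, ∑ w ∈ s \ {v, f v}, F v w = ∑ w ∈ s, ∑ v ∈ s \ {w, f w}, F v w := by
  refine sum_comm' fun v w => ?_
  simp only [mem_sdiff, mem_insert, mem_singleton, not_or]
  constructor
  · rintro ⟨hv, hw, hwv, hwf⟩
    exact ⟨⟨hv, Ne.symm hwv, fun h => hwf (by rw [h, hf])⟩, hw⟩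
  · rintro ⟨⟨hv, hvw, hvf⟩, hw⟩
    exact ⟨hv, hw, Ne.symm hvw, fun h => hvf (by rw [h, hf])⟩

namespace SimpleGraph

variable {V : Type*} [Fintype V] [DecidableEq V] (G : SimpleGraph V) [DecidableRel G.Adj]

/-- Perfect matchings of `G.induce s`, each encoded by its partner function, extended by the
identity outside `s`. -/
def matchingsOn (s : Finset V) : Finset (V → V) :=
  {f | (∀ x, f (f x) = x) ∧ (∀ x ∈ s, G.Adj x (f x)) ∧ ∀ x ∉ s, f x = x}

def degOn (s : Finset V) (w : V) : ℕ := #(G.neighborFinset w ∩ s)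

variable {G} {s t : Finset V} {f : V → V}

@[simp]
lemma degOn_univ (w : V) : G.degOn univ w = G.degree w := by
  rw [degOn, inter_univ, card_neighborFinset_eq_degree]

lemma mem_matchingsOn :
    f ∈ G.matchingsOn s ↔ (∀ x, f (f x) = x) ∧ (∀ x ∈ s, G.Adj x (f x)) ∧ ∀ x ∉ s, f x = x := by
  simp [matchingsOn]

lemma apply_mem_of_mem_matchingsOn (hf : f ∈ G.matchingsOn s) {x : V} (hx : x ∈ s) : f x ∈ s := by
  obtain ⟨hinv, hadj, hid⟩ := mem_matchingsOn.mp hf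
  by_contra h
  have := hinv x
  rw [hid _ h] at this
  exact (hadj x hx).ne this.symm

lemma degOn_pos_of_mem_matchingsOn (hf : f ∈ G.matchingsOn s) {x : V} (hx : x ∈ s) :
    0 < G.degOn s x :=
  card_pos.mpr ⟨f x, mem_inter.mpr ⟨(G.mem_neighborFinset _ _).mpr
    ((mem_matchingsOn.mp hf).2.1 x hx), apply_mem_of_mem_matchingsOn hf hx⟩⟩

lemma ite_mem_matchingsOn (hf : f ∈ G.matchingsOn s) (hts : t ⊆ s)
    (hft : ∀ x ∈ t, f x ∈ t) : (fun x => if x ∈ t then f x else x) ∈ G.matchingsOn t := by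
  obtain ⟨hinv, hadj, -⟩ := mem_matchingsOn.mp hf
  refine mem_matchingsOn.mpr ⟨fun x => ?_, fun x hx => ?_, fun x hx => if_neg hx⟩
  · by_cases hx : x ∈ t
    · simp [hx, hft x hx, hinv]
    · simp [hx]
  · simpa [hx] using hadj x (hts hx)

lemma apply_mem_sdiff_pair (hf : f ∈ G.matchingsOn s) {v : V} {x : V}
    (hx : x ∈ s \ {v, f v}) : f x ∈ s \ {v, f v} := by
  have hinv := (mem_matchingsOn.mp hf).1
  simp only [mem_sdiff, mem_insert, mem_singleton, not_or] at hx ⊢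
  refine ⟨apply_mem_of_mem_matchingsOn hf hx.1, fun h => hx.2.2 ?_, fun h => hx.2.1 ?_⟩
  · rw [← h, hinv]
  · rw [← hinv x, h, hinv]

lemma ite_mem_matchingsOn_sdiff_pair (hf : f ∈ G.matchingsOn s) (v : V) :
    (fun x => if x ∈ s \ {v, f v} then f x else x) ∈ G.matchingsOn (s \ {v, f v}) :=
  ite_mem_matchingsOn hf sdiff_subset fun _ hx => apply_mem_sdiff_pair hf hx

variable (G) in
lemma card_filter_apply_eq_le_card_matchingsOn_sdiff (v u : V) :
    #{g ∈ G.matchingsOn s | g v = u} ≤ #(G.matchingsOn (s \ {v, u})) := by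
  refine card_le_card_of_injOn (fun g x => if x ∈ s \ {v, u} then g x else x)
    (fun g hg => ?_) (fun g₁ hg₁ g₂ hg₂ h => ?_)
  · obtain ⟨hgs, rfl⟩ := mem_filter.mp (mem_coe.mp hg)
    exact ite_mem_matchingsOn_sdiff_pair hgs v
  · obtain ⟨hg₁, hv₁⟩ := mem_filter.mp (mem_coe.mp hg₁)
    obtain ⟨hg₂, hv₂⟩ := mem_filter.mp (mem_coe.mp hg₂)
    obtain ⟨hinv₁, -, hid₁⟩ := mem_matchingsOn.mp hg₁
    obtain ⟨hinv₂, -, hid₂⟩ := mem_matchingsOn.mp hg₂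
    funext x
    by_cases hx : x ∈ s \ {v, u}
    · simpa [hx] using congrFun h x
    rw [mem_sdiff, not_and_not_right, mem_insert, mem_singleton] at hx
    by_cases hxs : x ∈ s
    · rcases hx hxs with rfl | rfl
      · rw [hv₁, hv₂]
      · rw [← hv₁, hinv₁, hv₁, ← hv₂, hinv₂]
    · rw [hid₁ x hxs, hid₂ x hxs]

variable (G) in
lemma degOn_sdiff_pair_add {v u : V} (hv : v ∈ s) (hu : u ∈ s) (w : V) :
    G.degOn (s \ {v, u}) w + #(G.neighborFinset w ∩ {v, u}) = G.degOn s w := by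
  have hpair : G.neighborFinset w ∩ {v, u} = G.neighborFinset w ∩ s ∩ {v, u} := by
    rw [inter_assoc, inter_eq_right.mpr (insert_subset hv (singleton_subset_iff.mpr hu))]
  rw [degOn, degOn, ← inter_sdiff_assoc, hpair, card_sdiff_add_card_inter]

lemma sum_card_neighborFinset_inter_pair (hf : f ∈ G.matchingsOn s) {w : V} (hw : w ∈ s) :
    ∑ v ∈ s \ {w, f w}, #(G.neighborFinset w ∩ {v, f v}) + 2 = 2 * G.degOn s w := by
  obtain ⟨hinv, hadj, -⟩ := mem_matchingsOn.mp hf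
  set N := G.neighborFinset w
  have hsplit : ∀ v ∈ s \ {w, f w},
      #(N ∩ {v, f v}) = (if v ∈ N then 1 else 0) + if f v ∈ N then 1 else 0 := fun v hv => by
    rw [inter_comm, ← filter_mem_eq_inter, card_filter, sum_pair (hadj v (mem_sdiff.mp hv).1).ne]
  have hswap : ∑ v ∈ s \ {w, f w}, (if f v ∈ N then 1 else 0) =
      ∑ v ∈ s \ {w, f w}, if v ∈ N then 1 else 0 :=
    sum_nbij' f f (fun v hv => apply_mem_sdiff_pair hf hv) (fun v hv => apply_mem_sdiff_pair hf hv)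
      (fun v _ => hinv v) (fun v _ => hinv v) fun _ _ => rfl
  have hcount : {v ∈ s \ {w, f w} | v ∈ N} = (N ∩ s).erase (f w) := by
    ext v
    simp only [mem_filter, mem_sdiff, mem_insert, mem_singleton, not_or, mem_erase, mem_inter, N,
      mem_neighborFinset]
    constructor
    · rintro ⟨⟨hv, -, hvf⟩, hadjv⟩
      exact ⟨hvf, hadjv, hv⟩
    · rintro ⟨hvf, hadjv, hv⟩
      exact ⟨⟨hv, fun h => G.irrefl (h ▸ hadjv), hvf⟩, hadjv⟩
  have hfw : f w ∈ N ∩ s := mem_inter.mpr ⟨(G.mem_neighborFinset _ _).mpr (hadj w hw),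
    apply_mem_of_mem_matchingsOn hf hw⟩
  rw [sum_congr rfl hsplit, sum_add_distrib, hswap, ← card_filter, hcount, degOn,
    ← card_erase_add_one hfw]
  ring

variable (G) in
/-- The bound on `2 log #(G.matchingsOn (s \ {v, u}))` given by the induction hypothesis,
after linearizing `logFactorialRoot` at the degrees in `G.induce s`. -/
noncomputable def deletionBound (s : Finset V) (v u : V) : ℝ :=
  ∑ w ∈ s \ {v, u}, (logFactorialRoot (G.degOn s w) - #(G.neighborFinset w ∩ {v, u}) *
    (logFactorialRoot (G.degOn s w) - logFactorialRoot (G.degOn s w - 1)))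

lemma two_mul_log_card_filter_apply_le (hf : f ∈ G.matchingsOn s) {v : V} (hv : v ∈ s)
    (ih : 2 * log #(G.matchingsOn (s \ {v, f v})) ≤
      ∑ w ∈ s \ {v, f v}, logFactorialRoot (G.degOn (s \ {v, f v}) w)) :
    2 * log #{g ∈ G.matchingsOn s | g v = f v} ≤ G.deletionBound s v (f v) := by
  have hfiber : 0 < #{g ∈ G.matchingsOn s | g v = f v} := card_pos.mpr ⟨f, by simp [hf]⟩
  calc 2 * log #{g ∈ G.matchingsOn s | g v = f v}
      ≤ 2 * log #(G.matchingsOn (s \ {v, f v})) := by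
        have := card_filter_apply_eq_le_card_matchingsOn_sdiff G (s := s) v (f v)
        gcongr
    _ ≤ _ := ih
    _ ≤ _ := sum_le_sum fun w hw => by
        have hadd := degOn_sdiff_pair_add G hv (apply_mem_of_mem_matchingsOn hf hv) w
        have hpos := degOn_pos_of_mem_matchingsOn (ite_mem_matchingsOn_sdiff_pair hf v) hw
        have hδ : #(G.neighborFinset w ∩ {v, f v}) ≤ 2 :=
          (card_le_card inter_subset_right).trans card_le_two
        have := logFactorialRoot_sub_le (d := G.degOn s w) hδ (by omega)
        rwa [show G.degOn s w - #(G.neighborFinset w ∩ {v, f v}) =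
          G.degOn (s \ {v, f v}) w by omega] at this

lemma card_mul_log_card_matchingsOn_le {v : V} (hv : v ∈ s)
    (ih : ∀ f ∈ G.matchingsOn s, 2 * log #(G.matchingsOn (s \ {v, f v})) ≤
      ∑ w ∈ s \ {v, f v}, logFactorialRoot (G.degOn (s \ {v, f v}) w)) :
    #(G.matchingsOn s) * log #(G.matchingsOn s) ≤ #(G.matchingsOn s) * log (G.degOn s v) +
      (1 / 2) * ∑ f ∈ G.matchingsOn s, G.deletionBound s v (f v) := by
  have hentropy := card_mul_log_card_le_of_mapsTo (s := G.matchingsOn s)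
    (t := G.neighborFinset v ∩ s) (g := fun f => f v) fun f hf =>
      mem_inter.mpr ⟨(G.mem_neighborFinset _ _).mpr ((mem_matchingsOn.mp hf).2.1 v hv),
        apply_mem_of_mem_matchingsOn hf hv⟩
  have hdel : ∑ f ∈ G.matchingsOn s, log #{g ∈ G.matchingsOn s | g v = f v} ≤
      ∑ f ∈ G.matchingsOn s, (1 / 2) * G.deletionBound s v (f v) :=
    sum_le_sum fun f hf => by linarith [two_mul_log_card_filter_apply_le hf hv (ih f hf)]
  rw [mul_sum]
  exact hentropy.trans (by simpa [degOn] using hdel)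

lemma sum_deletionBound (hf : f ∈ G.matchingsOn s) :
    ∑ v ∈ s, G.deletionBound s v (f v) =
      ∑ w ∈ s, (#s * logFactorialRoot (G.degOn s w) - 2 * log (G.degOn s w)) := by
  obtain ⟨hinv, hadj, -⟩ := mem_matchingsOn.mp hf
  simp only [deletionBound]
  rw [sum_sum_sdiff_pair_comm hinv]
  refine sum_congr rfl fun w hw => ?_
  have hcard : #(s \ {w, f w}) + 2 = #s := by
    rw [← card_pair (hadj w hw).ne, card_sdiff_add_card_eq_card
      (insert_subset hw (singleton_subset_iff.mpr (apply_mem_of_mem_matchingsOn hf hw)))]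
  have hcount : (∑ v ∈ s \ {w, f w}, (#(G.neighborFinset w ∩ {v, f v}) : ℝ)) + 2 =
      2 * G.degOn s w := by
    exact_mod_cast sum_card_neighborFinset_inter_pair hf hw
  rw [sum_sub_distrib, sum_const, nsmul_eq_mul, ← sum_mul, log_eq_logFactorialRoot_add]
  rw [← hcard]
  push_cast
  linear_combination (logFactorialRoot (G.degOn s w - 1) - logFactorialRoot (G.degOn s w)) * hcount

lemma card_matchingsOn_empty_le_one : #(G.matchingsOn ∅) ≤ 1 :=
  card_le_one.mpr fun f hf g hg => funext fun x => by
    rw [(mem_matchingsOn.mp hf).2.2 x (notMem_empty x), (mem_matchingsOn.mp hg).2.2 x (notMem_empty x)]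

variable (G) in
theorem two_mul_log_card_matchingsOn_le (s : Finset V) :
    2 * log #(G.matchingsOn s) ≤ ∑ w ∈ s, logFactorialRoot (G.degOn s w) := by
  induction s using Finset.strongInduction with
  | H s ih =>
  set m := #(G.matchingsOn s)
  set n := #s
  rcases s.eq_empty_or_nonempty with rfl | hs
  · have := log_nonpos m.cast_nonneg (mod_cast card_matchingsOn_empty_le_one (G := G))
    rw [sum_empty]
    linarith
  rcases Nat.eq_zero_or_pos m with hm | hm
  · simpa [hm] using sum_nonneg fun w _ => logFactorialRoot_nonneg (G.degOn s w)
  have hvertex (v : V) (hv : v ∈ s) := card_mul_log_card_matchingsOn_le hv fun f hf =>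
    ih _ (sdiff_ssubset (insert_subset hv (singleton_subset_iff.mpr
      (apply_mem_of_mem_matchingsOn hf hv))) (insert_nonempty _ _))
  have htotal : n * (m * log m) ≤ n * m / 2 * ∑ w ∈ s, logFactorialRoot (G.degOn s w) :=
    calc n * (m * log m) = ∑ v ∈ s, m * log m := by rw [sum_const, nsmul_eq_mul]
      _ ≤ ∑ v ∈ s, (m * log (G.degOn s v) +
            (1 / 2) * ∑ f ∈ G.matchingsOn s, G.deletionBound s v (f v)) := sum_le_sum hvertex
      _ = m * ∑ v ∈ s, log (G.degOn s v) +
            (1 / 2) * ∑ f ∈ G.matchingsOn s, ∑ v ∈ s, G.deletionBound s v (f v) := by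
        rw [sum_add_distrib, ← mul_sum, ← mul_sum, sum_comm]
      _ = m * ∑ v ∈ s, log (G.degOn s v) + (1 / 2) * ∑ f ∈ G.matchingsOn s,
            ∑ w ∈ s, (n * logFactorialRoot (G.degOn s w) - 2 * log (G.degOn s w)) := by
        rw [sum_congr rfl fun f hf => sum_deletionBound hf]
      _ = n * m / 2 * ∑ w ∈ s, logFactorialRoot (G.degOn s w) := by
        rw [sum_const, sum_sub_distrib, ← mul_sum, ← mul_sum, nsmul_eq_mul]
        ring
  have hnm : (0 : ℝ) < n * m := by
    have : 0 < n := card_pos.mpr hs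
    positivity
  nlinarith

def subgraphOfMemMatchingsOn (hf : f ∈ G.matchingsOn univ) : G.Subgraph where
  verts := Set.univ
  Adj a b := f a = b
  adj_sub h := h ▸ (mem_matchingsOn.mp hf).2.1 _ (mem_univ _)
  edge_vert _ := Set.mem_univ _
  symm := ⟨fun a b (h : f a = b) => show f b = a by rw [← h, (mem_matchingsOn.mp hf).1]⟩

variable (G) in
lemma ncard_setOf_isPerfectMatching :
    {M : G.Subgraph | M.IsPerfectMatching}.ncard = #(G.matchingsOn univ) := by
  rw [← Set.ncard_coe_finset]
  symm
  refine Set.ncard_congr (fun f hf => subgraphOfMemMatchingsOn hf) (fun f hf => ?_)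
    (fun f g hf hg h => ?_) (fun M hM => ?_)
  · exact Subgraph.isPerfectMatching_iff.mpr fun v => existsUnique_eq'
  · funext a
    have : (subgraphOfMemMatchingsOn hf).Adj a (f a) := rfl
    rw [h] at this
    exact Eq.symm this
  · choose p hp hpu using Subgraph.isPerfectMatching_iff.mp hM
    refine ⟨p, mem_matchingsOn.mpr ⟨fun x => (hpu _ x (M.adj_symm (hp x))).symm,
      fun x _ => M.adj_sub (hp x), fun x hx => absurd (mem_univ x) hx⟩, ?_⟩
    ext a b
    · simpa [subgraphOfMemMatchingsOn] using hM.2 a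
    · exact ⟨fun h => h ▸ hp a, fun h => (hpu a b h).symm⟩

end SimpleGraph

theorem perfmat_le_general (V : Type*) [Fintype V]
    (G : SimpleGraph V) [DecidableRel G.Adj] :
    (({M : G.Subgraph | M.IsPerfectMatching} : Set G.Subgraph).ncard : ℝ) ≤
      ∏ v : V, (if G.degree v = 0 then (0 : ℝ) else
        ((G.degree v).factorial : ℝ) ^ ((1 : ℝ) / (2 * (G.degree v : ℝ)))) := by
  classical
  rw [G.ncard_setOf_isPerfectMatching]
  set m := #(G.matchingsOn univ)
  rcases Nat.eq_zero_or_pos m with hm | hm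
  · rw [hm, Nat.cast_zero]
    exact prod_nonneg fun v _ => by split_ifs <;> positivity
  have hdeg (v : V) : G.degree v ≠ 0 := by
    simpa using (degOn_pos_of_mem_matchingsOn (card_pos.mp hm).choose_spec (mem_univ v)).ne'
  have hlog := G.two_mul_log_card_matchingsOn_le univ
  simp only [degOn_univ] at hlog
  calc (m : ℝ) ≤ exp (∑ v, logFactorialRoot (G.degree v) / 2) := by
        rw [← log_le_iff_le_exp (by positivity), ← sum_div]
        linarith
    _ = _ := by
        rw [exp_sum]
        exact prod_congr rfl fun v _ => by rw [if_neg (hdeg v), exp_logFactorialRoot_div_two]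

/-- Upper bound on the number of perfect matchings of a graph with an even
number of vertices, in terms of the degrees of its vertices; a factor with
`deg v = 0` is interpreted as `0`. -/
theorem perfmat_le (V : Type*) [Fintype V] [DecidableEq V]
    (G : SimpleGraph V) [DecidableRel G.Adj] (heven : Even (Fintype.card V)) :
    (({M : G.Subgraph | M.IsPerfectMatching} : Set G.Subgraph).ncard : ℝ) ≤
      ∏ v : V, (if G.degree v = 0 then (0 : ℝ) else
        ((G.degree v).factorial : ℝ) ^ ((1 : ℝ) / (2 * (G.degree v : ℝ)))) :=
  perfmat_le_general V G
end
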